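/- Partial diagonalization of the symmetric coefficient matrix: let G be a finite group, ω a normalized unitary 2-cocycle on G, and (D^α)_{α ∈ A} a family of pairwise inequivalent irreducible unitary ω-projective representations of G with dimensions d_α satisfying ∑_{α ∈ A} d_α² = |G|. Let U be the matrix with rows indexed by triples θ = (α, i, j) (i, j ∈ Fin d_α), columns indexed by g ∈ G, and entries U_{θ,g} = √(d_α/|G|) · (D^α g)_{i j}. For any c : G → ℂ, let W ∈ Matrix G G ℂ have entries W_{g_l, g_r} = (1/√|G|) · ω g_r (g_r⁻¹ * g_l) · c (g_r⁻¹ * g_l). Then for all θ = (α, i, j) and θ' = (α', i', j'), (U * W * Uᴴ)_{θ, θ'} = δ_{α α'} · δ_{i i'} · (1/√|G|) · ∑_{g ∈ G} c(g) · (D^α g)_{j' j}. In particular, U * W * Uᴴ is the direct sum over α ∈ A of d_α identical copies of the d_α × d_α block with entries (1/√|G|) ∑_g c(g) (D^α g)_{j' j}. -/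

import Mathlib

/-!
Substituting `gl = gr * g`, the cocycle factor in `W` turns `D^α (gr * g)` into
`D^α gr * D^α g`, so up to scalars every entry of `U * W * Uᴴ` is
`∑ k, (∑ gr, D^α gr i k * conj (D^α' gr i' j')) * ∑ g, c g * D^α g k j`.
The sums over `gr` are the Schur orthogonality relations for unitary irreducible
`ω`-projective representations: since `|ω| = 1`, averaging `D₁ g * M * (D₂ g)ᴴ` over `G` gives
an intertwiner, which by Schur's lemma vanishes for inequivalent representations and, for equal
ones, is a scalar matrix determined by its trace.
-/

open Matrix Kronecker BigOperators

noncomputable section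

/-- A unitary `ω`-projective representation of `G` of dimension `d`. -/
def IsUnitaryProjRep {G : Type} [Group G] (ω : G → G → ℂ) {d : ℕ}
    (D : G → Matrix (Fin d) (Fin d) ℂ) : Prop :=
  (∀ g, D g ∈ Matrix.unitaryGroup (Fin d) ℂ) ∧
    ∀ g h, D g * D h = ω g h • D (g * h)

/-- Irreducibility: the only invariant subspaces of `ℂ^d` are `⊥` and `⊤`. -/
def IsIrred {G : Type} [Group G] {d : ℕ}
    (D : G → Matrix (Fin d) (Fin d) ℂ) : Prop :=
  ∀ p : Submodule ℂ (Fin d → ℂ),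
    (∀ g : G, ∀ v ∈ p, (D g).mulVec v ∈ p) → p = ⊥ ∨ p = ⊤

/-- Equivalence of projective representations (of possibly different stated dimensions). -/
def ProjEquiv {G : Type} [Group G] {d₁ d₂ : ℕ}
    (D₁ : G → Matrix (Fin d₁) (Fin d₁) ℂ)
    (D₂ : G → Matrix (Fin d₂) (Fin d₂) ℂ) : Prop :=
  ∃ h : d₁ = d₂, ∃ S : Matrix (Fin d₂) (Fin d₂) ℂ, IsUnit S.det ∧
    ∀ g, D₂ g = S⁻¹ * (Matrix.reindex (finCongr h) (finCongr h) (D₁ g)) * S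

/-- A normalized unitary 2-cocycle on `G`. -/
def IsCocycle {G : Type} [Group G] (ω : G → G → ℂ) : Prop :=
  (∀ g h, ‖ω g h‖ = 1) ∧ (∀ g, ω 1 g = 1) ∧ (∀ g, ω g 1 = 1) ∧
    ∀ g h k, ω g h * ω (g * h) k = ω g (h * k) * ω h k

/-- The regular representation matrix of `g`. -/
def regRep (G : Type) [Group G] [DecidableEq G] (g : G) : Matrix G G ℂ :=
  fun h h' => if h = g * h' then 1 else 0

/-- The `ω`-projective regular representation matrix of `g`. -/
def projRegRep {G : Type} [Group G] [DecidableEq G] (ω : G → G → ℂ) (g : G) :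
    Matrix G G ℂ :=
  fun h h' => if h = g * h' then ω g h' else 0

section Schur

variable {G : Type} [Group G] {d₁ d₂ : ℕ}
  {D₁ : G → Matrix (Fin d₁) (Fin d₁) ℂ} {D₂ : G → Matrix (Fin d₂) (Fin d₂) ℂ}
  {T : Matrix (Fin d₁) (Fin d₂) ℂ}

theorem IsIrred.ker_mulVecLin_eq_bot_or_eq_zero (hi₂ : IsIrred D₂)
    (hT : ∀ g, D₁ g * T = T * D₂ g) :
    LinearMap.ker T.mulVecLin = ⊥ ∨ T = 0 := by
  refine (hi₂ _ fun g v hv => ?_).imp_right fun h => ?_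
  · simp only [LinearMap.mem_ker, Matrix.mulVecLin_apply] at hv ⊢
    rw [Matrix.mulVec_mulVec, ← hT, ← Matrix.mulVec_mulVec, hv, Matrix.mulVec_zero]
  · rw [LinearMap.ker_eq_top, ← Matrix.toLin'_apply'] at h
    exact Matrix.toLin'.map_eq_zero_iff.mp h

theorem IsIrred.range_mulVecLin_eq_top_or_eq_zero (hi₁ : IsIrred D₁)
    (hT : ∀ g, D₁ g * T = T * D₂ g) :
    LinearMap.range T.mulVecLin = ⊤ ∨ T = 0 := by
  refine (hi₁ _ fun g v hv => ?_).symm.imp_right fun h => ?_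
  · obtain ⟨w, rfl⟩ := hv
    exact ⟨D₂ g *ᵥ w, by simp [Matrix.mulVec_mulVec, hT]⟩
  · rw [LinearMap.range_eq_bot, ← Matrix.toLin'_apply'] at h
    exact Matrix.toLin'.map_eq_zero_iff.mp h

theorem IsIrred.eq_zero_of_intertwines_of_not_projEquiv (hi₁ : IsIrred D₁) (hi₂ : IsIrred D₂)
    (hne : ¬ ProjEquiv D₁ D₂) (hT : ∀ g, D₁ g * T = T * D₂ g) : T = 0 := by
  by_contra hT0
  have hker := (hi₂.ker_mulVecLin_eq_bot_or_eq_zero hT).resolve_right hT0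
  have hrange := (hi₁.range_mulVecLin_eq_top_or_eq_zero hT).resolve_right hT0
  let e := LinearEquiv.ofBijective T.mulVecLin
    ⟨LinearMap.ker_eq_bot.mp hker, LinearMap.range_eq_top.mp hrange⟩
  obtain rfl : d₁ = d₂ := by simpa using e.finrank_eq.symm
  have hdet : IsUnit T.det :=
    (Matrix.isUnit_iff_isUnit_det T).mp (Matrix.mulVec_injective_iff_isUnit.mp e.injective)
  refine hne ⟨rfl, T, hdet, fun g => ?_⟩
  simp only [finCongr_refl, Matrix.reindex_refl_refl]
  rw [Matrix.mul_assoc, hT g, ← Matrix.mul_assoc, Matrix.nonsing_inv_mul T hdet, Matrix.one_mul]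

theorem IsIrred.exists_eq_smul_one_of_commute {d : ℕ} {D : G → Matrix (Fin d) (Fin d) ℂ}
    (hi : IsIrred D) {T : Matrix (Fin d) (Fin d) ℂ} (hT : ∀ g, D g * T = T * D g) :
    ∃ c : ℂ, T = c • 1 := by
  rcases isEmpty_or_nonempty (Fin d) with _ | _
  · exact ⟨0, Subsingleton.elim _ _⟩
  obtain ⟨c, hc⟩ := Module.End.exists_eigenvalue T.mulVecLin
  obtain ⟨v, hv⟩ := hc.exists_hasEigenvector
  have hcomm : ∀ g, D g * (T - c • 1) = (T - c • 1) * D g := fun g => by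
    simp [Matrix.mul_sub, Matrix.sub_mul, hT g]
  refine ⟨c, sub_eq_zero.mp ((hi.ker_mulVecLin_eq_bot_or_eq_zero hcomm).resolve_left
    fun hker => hv.2 ?_)⟩
  rw [← Submodule.mem_bot ℂ, ← hker]
  simp [hv.apply_eq_smul]

end Schur

section Orthogonality

variable {G : Type} [Group G] {ω : G → G → ℂ} {d₁ d₂ : ℕ}
  {D₁ : G → Matrix (Fin d₁) (Fin d₁) ℂ} {D₂ : G → Matrix (Fin d₂) (Fin d₂) ℂ}

theorem IsCocycle.mul_conj_self (hω : IsCocycle ω) (g h : G) :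
    ω g h * starRingEnd ℂ (ω g h) = 1 := by
  rw [Complex.mul_conj, Complex.normSq_eq_norm_sq, hω.1 g h]
  norm_num

variable [Fintype G]

theorem IsUnitaryProjRep.sum_mul_mul_conjTranspose_intertwines (hω : IsCocycle ω)
    (h₁ : IsUnitaryProjRep ω D₁) (h₂ : IsUnitaryProjRep ω D₂)
    (M : Matrix (Fin d₁) (Fin d₂) ℂ) (h : G) :
    D₁ h * (∑ g, D₁ g * M * (D₂ g)ᴴ) = (∑ g, D₁ g * M * (D₂ g)ᴴ) * D₂ h := by
  have hfix : D₁ h * (∑ g, D₁ g * M * (D₂ g)ᴴ) * (D₂ h)ᴴ = ∑ g, D₁ g * M * (D₂ g)ᴴ := by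
    rw [Matrix.mul_sum, Matrix.sum_mul]
    refine Fintype.sum_equiv (Equiv.mulLeft h) _ _ fun g => ?_
    calc D₁ h * (D₁ g * M * (D₂ g)ᴴ) * (D₂ h)ᴴ
        = (D₁ h * D₁ g) * M * (D₂ h * D₂ g)ᴴ := by
          simp only [Matrix.conjTranspose_mul, Matrix.mul_assoc]
      _ = (ω h g * starRingEnd ℂ (ω h g)) • (D₁ (h * g) * M * (D₂ (h * g))ᴴ) := by
          rw [h₁.2, h₂.2, Matrix.conjTranspose_smul, Matrix.smul_mul, Matrix.smul_mul,
            Matrix.mul_smul, smul_smul, Complex.star_def]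
      _ = D₁ (h * g) * M * (D₂ (h * g))ᴴ := by rw [hω.mul_conj_self, one_smul]
  conv_rhs => rw [← hfix]
  have hu : (D₂ h)ᴴ * D₂ h = 1 := Matrix.mem_unitaryGroup_iff'.mp (h₂.1 h)
  rw [Matrix.mul_assoc _ (D₂ h)ᴴ, hu, Matrix.mul_one]

theorem Matrix.mul_single_one_mul_apply {l m n o R : Type} [Fintype m] [Fintype n]
    [DecidableEq m] [DecidableEq n] [Semiring R] (A : Matrix l m R) (B : Matrix n o R)
    (a : m) (b : n) (i : l) (j : o) :
    (A * Matrix.single a b (1 : R) * B) i j = A i a * B b j := by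
  simp [Matrix.mul_apply, Matrix.single_apply, ite_and]

theorem IsUnitaryProjRep.sum_apply_mul_conj_apply_eq_zero_of_not_projEquiv (hω : IsCocycle ω)
    (h₁ : IsUnitaryProjRep ω D₁) (h₂ : IsUnitaryProjRep ω D₂) (hi₁ : IsIrred D₁)
    (hi₂ : IsIrred D₂) (hne : ¬ ProjEquiv D₁ D₂) (i a : Fin d₁) (i' b : Fin d₂) :
    ∑ g, D₁ g i a * starRingEnd ℂ (D₂ g i' b) = 0 := by
  have hT := hi₁.eq_zero_of_intertwines_of_not_projEquiv hi₂ hne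
    (h₁.sum_mul_mul_conjTranspose_intertwines hω h₂ (Matrix.single a b 1))
  simpa [Matrix.sum_apply, Matrix.mul_single_one_mul_apply] using congrFun₂ hT i i'

theorem IsUnitaryProjRep.sum_apply_mul_conj_apply_self (hω : IsCocycle ω) {d : ℕ}
    {D : G → Matrix (Fin d) (Fin d) ℂ} (h : IsUnitaryProjRep ω D) (hi : IsIrred D)
    (i a i' b : Fin d) :
    ∑ g, D g i a * starRingEnd ℂ (D g i' b)
      = Fintype.card G / d * (if a = b then 1 else 0) * (if i = i' then 1 else 0) := by
  obtain ⟨c, hc⟩ := hi.exists_eq_smul_one_of_commute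
    (h.sum_mul_mul_conjTranspose_intertwines hω h (Matrix.single a b 1))
  have htrace_summand (g : G) : (D g * Matrix.single a b 1 * (D g)ᴴ).trace
      = if a = b then 1 else 0 := by
    have hu : (D g)ᴴ * D g = 1 := Matrix.mem_unitaryGroup_iff'.mp (h.1 g)
    rw [Matrix.trace_mul_comm, ← Matrix.mul_assoc, hu, Matrix.one_mul]
    split_ifs with hab
    · rw [hab, Matrix.trace_single_eq_same]
    · exact Matrix.trace_single_eq_of_ne _ _ _ hab
  have htrace : c * d = Fintype.card G * (if a = b then 1 else 0) := by
    have := congrArg Matrix.trace hc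
    rw [Matrix.trace_sum, Finset.sum_congr rfl fun g _ => htrace_summand g, Matrix.trace_smul,
      Matrix.trace_one] at this
    simpa [mul_comm] using this.symm
  have hd : (d : ℂ) ≠ 0 := Nat.cast_ne_zero.mpr (Fin.pos i).ne'
  have hentry := congrFun₂ hc i i'
  simp only [Matrix.sum_apply, Matrix.mul_single_one_mul_apply, Matrix.conjTranspose_apply,
    Matrix.smul_apply, Matrix.one_apply, smul_eq_mul, Complex.star_def] at hentry
  rw [hentry, (eq_div_iff hd).mpr htrace]
  ring

end Orthogonality

theorem IsUnitaryProjRep.sum_sum_cocycle_mul_apply {G : Type} [Group G] [Fintype G]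
    {ω : G → G → ℂ} {d : ℕ} {D : G → Matrix (Fin d) (Fin d) ℂ} (h : IsUnitaryProjRep ω D)
    (c f : G → ℂ) (i j : Fin d) :
    ∑ gr, ∑ g, ω gr g * D (gr * g) i j * c g * f gr
      = ∑ k, (∑ gr, D gr i k * f gr) * ∑ g, c g * D g k j := by
  have hmul (gr g : G) : ω gr g * D (gr * g) i j = ∑ k, D gr i k * D g k j := by
    rw [← Matrix.mul_apply, h.2, Matrix.smul_apply, smul_eq_mul]
  simp only [hmul, Finset.sum_mul, Finset.mul_sum]
  rw [Finset.sum_congr rfl fun gr _ => Finset.sum_comm, Finset.sum_comm]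
  refine Finset.sum_congr rfl fun k _ => ?_
  rw [Finset.sum_comm]
  refine Finset.sum_congr rfl fun g _ => Finset.sum_congr rfl fun gr _ => ?_
  ring

theorem Matrix.mul_mul_conjTranspose_apply_eq_sum_sum_mul_left {ι G R : Type} [Group G]
    [Fintype G] [Semiring R] [StarRing R] (U : Matrix ι G R) (W : Matrix G G R) (x y : ι) :
    (U * W * Uᴴ) x y = ∑ gr, ∑ g, U x (gr * g) * W (gr * g) gr * star (U y gr) := by
  simp only [Matrix.mul_apply, Matrix.conjTranspose_apply, Finset.sum_mul]
  exact Finset.sum_congr rfl fun gr _ =>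
    (Fintype.sum_equiv (Equiv.mulLeft gr) _ _ fun g => rfl).symm

theorem partial_diagonalization_coefficient_matrix_general
    {G : Type} [Group G] [Fintype G]
    (ω : G → G → ℂ) (hω : IsCocycle ω)
    {A : Type}
    (dfam : A → ℕ)
    (Dfam : ∀ α : A, G → Matrix (Fin (dfam α)) (Fin (dfam α)) ℂ)
    (hrep : ∀ α, IsUnitaryProjRep ω (Dfam α))
    (hirr : ∀ α, IsIrred (Dfam α))
    (hinequiv : ∀ α β, α ≠ β → ¬ ProjEquiv (Dfam α) (Dfam β))
    (U : Matrix (Σ α : A, Fin (dfam α) × Fin (dfam α)) G ℂ)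
    (hU : ∀ (α : A) (i j : Fin (dfam α)) (g : G),
      U ⟨α, (i, j)⟩ g
        = (Real.sqrt ((dfam α : ℝ) / (Fintype.card G : ℝ)) : ℂ) * Dfam α g i j)
    (c : G → ℂ)
    (W : Matrix G G ℂ)
    (hW : ∀ gl gr : G,
      W gl gr = ((Real.sqrt (Fintype.card G) : ℂ))⁻¹
        * ω gr (gr⁻¹ * gl) * c (gr⁻¹ * gl)) :
    (∀ (α : A) (i j i' j' : Fin (dfam α)),
      (U * W * Uᴴ) ⟨α, (i, j)⟩ ⟨α, (i', j')⟩
        = (if i = i' then 1 else 0) * ((Real.sqrt (Fintype.card G) : ℂ))⁻¹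
            * ∑ g : G, c g * Dfam α g j' j) ∧
    (∀ (α α' : A), α ≠ α' →
      ∀ (i j : Fin (dfam α)) (i' j' : Fin (dfam α')),
        (U * W * Uᴴ) ⟨α, (i, j)⟩ ⟨α', (i', j')⟩ = 0) := by
  have hentry (α α' : A) (i j : Fin (dfam α)) (i' j' : Fin (dfam α')) :
      (U * W * Uᴴ) ⟨α, (i, j)⟩ ⟨α', (i', j')⟩
        = √(dfam α / Fintype.card G) * √(dfam α' / Fintype.card G) * (√(Fintype.card G) : ℂ)⁻¹
          * ∑ k, (∑ gr, Dfam α gr i k * starRingEnd ℂ (Dfam α' gr i' j'))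
            * ∑ g, c g * Dfam α g k j := by
    rw [Matrix.mul_mul_conjTranspose_apply_eq_sum_sum_mul_left,
      ← (hrep α).sum_sum_cocycle_mul_apply, Finset.mul_sum]
    refine Finset.sum_congr rfl fun gr _ => ?_
    rw [Finset.mul_sum]
    refine Finset.sum_congr rfl fun g _ => ?_
    simp only [hU, hW, inv_mul_cancel_left, Complex.star_def, map_mul, Complex.conj_ofReal]
    ring
  refine ⟨fun α i j i' j' => ?_, fun α α' hne i j i' j' => ?_⟩
  · have hd : (dfam α : ℂ) ≠ 0 := Nat.cast_ne_zero.mpr (Fin.pos i).ne'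
    have hsq : (√(dfam α / Fintype.card G) : ℂ) * √(dfam α / Fintype.card G)
        = dfam α / Fintype.card G := by
      rw [← Complex.ofReal_mul, Real.mul_self_sqrt (by positivity)]
      simp
    simp only [hentry, (hrep α).sum_apply_mul_conj_apply_self hω (hirr α)]
    rw [Fintype.sum_eq_single j' fun k hk => by simp [hk], if_pos rfl, hsq]
    field_simp
  · simp only [hentry, (hrep α).sum_apply_mul_conj_apply_eq_zero_of_not_projEquiv hω (hrep α')
      (hirr α) (hirr α') (hinequiv α α' hne), zero_mul, Finset.sum_const_zero, mul_zero]

/-- partial diagonalization of the symmetric coefficient matrix. -/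
theorem partial_diagonalization_coefficient_matrix
    {G : Type} [Group G] [Fintype G] [DecidableEq G]
    (ω : G → G → ℂ) (hω : IsCocycle ω)
    {A : Type} [Fintype A] [DecidableEq A]
    (dfam : A → ℕ)
    (Dfam : ∀ α : A, G → Matrix (Fin (dfam α)) (Fin (dfam α)) ℂ)
    (hrep : ∀ α, IsUnitaryProjRep ω (Dfam α))
    (hirr : ∀ α, IsIrred (Dfam α))
    (hinequiv : ∀ α β, α ≠ β → ¬ ProjEquiv (Dfam α) (Dfam β))
    (hdim : ∑ α : A, (dfam α) ^ 2 = Fintype.card G)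
    (U : Matrix (Σ α : A, Fin (dfam α) × Fin (dfam α)) G ℂ)
    (hU : ∀ (α : A) (i j : Fin (dfam α)) (g : G),
      U ⟨α, (i, j)⟩ g
        = (Real.sqrt ((dfam α : ℝ) / (Fintype.card G : ℝ)) : ℂ) * Dfam α g i j)
    (c : G → ℂ)
    (W : Matrix G G ℂ)
    (hW : ∀ gl gr : G,
      W gl gr = ((Real.sqrt (Fintype.card G) : ℂ))⁻¹
        * ω gr (gr⁻¹ * gl) * c (gr⁻¹ * gl)) :
    (∀ (α : A) (i j i' j' : Fin (dfam α)),
      (U * W * Uᴴ) ⟨α, (i, j)⟩ ⟨α, (i', j')⟩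
        = (if i = i' then 1 else 0) * ((Real.sqrt (Fintype.card G) : ℂ))⁻¹
            * ∑ g : G, c g * Dfam α g j' j) ∧
    (∀ (α α' : A), α ≠ α' →
      ∀ (i j : Fin (dfam α)) (i' j' : Fin (dfam α')),
        (U * W * Uᴴ) ⟨α, (i, j)⟩ ⟨α', (i', j')⟩ = 0) :=
  partial_diagonalization_coefficient_matrix_general ω hω dfam Dfam hrep hirr hinequiv U hU c W hW
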